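/- arXiv:1108.0027 — 2 statements merged into one kernel-verified Lean document; each statement's English description precedes it below -/
import Mathlib

section
/- The Pareto-Lognormal density f(x) = β x^{β−1} e^{−βμ + β²τ²/2} Φᶜ((log x − μ + βτ²)/τ) is the derivative of the Pareto-Lognormal CDF F(x) = Φ((log x − μ)/τ) + x^β e^{−βμ + β²τ²/2} Φᶜ((log x − μ + βτ²)/τ) for all x > 0. -/
/-!
Differentiating `F` by the chain and product rules gives `f` plus the two Gaussian terms
`φ(s) / (x τ)` and `-x^β e^{-βμ + β²τ²/2} φ(s + βτ) / (x τ)`, where `s = (log x - μ) / τ`.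
They cancel because completing the square gives `φ(s) = e^{cs + c²/2} φ(s + c)`, and for
`c = βτ` the factor `e^{βτ s}` is `x^β e^{-βμ}`.
-/

open MeasureTheory Filter

noncomputable def Phi (x : ℝ) : ℝ :=
  ∫ t in Set.Iic x, (Real.sqrt (2 * Real.pi))⁻¹ * Real.exp (-t ^ 2 / 2)

noncomputable def PhiC (x : ℝ) : ℝ := 1 - Phi x

noncomputable def erf (x : ℝ) : ℝ :=
  (2 / Real.sqrt Real.pi) * ∫ t in (0:ℝ)..x, Real.exp (-t ^ 2)

noncomputable def erfc (x : ℝ) : ℝ := 1 - erf x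


noncomputable def plnPDF (β μ τ x : ℝ) : ℝ :=
  β * x ^ (β - 1) * Real.exp (-β * μ + β ^ 2 * τ ^ 2 / 2) *
    PhiC ((Real.log x - μ + β * τ ^ 2) / τ)

noncomputable def plnCDF (β μ τ x : ℝ) : ℝ :=
  Phi ((Real.log x - μ) / τ) + x ^ β * Real.exp (-β * μ + β ^ 2 * τ ^ 2 / 2) *
    PhiC ((Real.log x - μ + β * τ ^ 2) / τ)

noncomputable def phi (t : ℝ) : ℝ := (Real.sqrt (2 * Real.pi))⁻¹ * Real.exp (-t ^ 2 / 2)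

lemma integrable_phi : Integrable phi := by
  have h : Integrable fun t : ℝ => Real.exp (-(1 / 2 : ℝ) * t ^ 2) :=
    integrable_exp_neg_mul_sq (by norm_num)
  refine (h.const_mul (Real.sqrt (2 * Real.pi))⁻¹).congr (Eventually.of_forall fun t => ?_)
  simp only [phi]
  ring_nf

lemma continuous_phi : Continuous phi := by
  unfold phi
  fun_prop

lemma hasDerivAt_Phi (x : ℝ) : HasDerivAt Phi (phi x) x := by
  have hPhi : ∀ y, Phi y = Phi 0 + ∫ t in (0 : ℝ)..y, phi t := fun y => by
    rw [← intervalIntegral.integral_Iic_sub_Iic integrable_phi.integrableOn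
      integrable_phi.integrableOn]
    simp only [Phi, phi]
    ring
  have hint : HasDerivAt (fun y => ∫ t in (0 : ℝ)..y, phi t) (phi x) x :=
    intervalIntegral.integral_hasDerivAt_right integrable_phi.intervalIntegrable
      continuous_phi.aestronglyMeasurable.stronglyMeasurableAtFilter continuous_phi.continuousAt
  exact (hint.const_add (Phi 0)).congr_of_eventuallyEq (Eventually.of_forall hPhi)

lemma hasDerivAt_PhiC (x : ℝ) : HasDerivAt PhiC (-phi x) x :=
  (hasDerivAt_Phi x).const_sub 1

lemma phi_eq_exp_mul_phi_add (s c : ℝ) :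
    phi s = Real.exp (c * s + c ^ 2 / 2) * phi (s + c) := by
  simp only [phi]
  rw [mul_left_comm, ← Real.exp_add]
  ring_nf

lemma phi_log_div_eq (β μ τ x : ℝ) (hτ : τ ≠ 0) (hx : 0 < x) :
    phi ((Real.log x - μ) / τ) =
      x ^ β * Real.exp (-β * μ + β ^ 2 * τ ^ 2 / 2) * phi ((Real.log x - μ + β * τ ^ 2) / τ) := by
  have hshift : (Real.log x - μ) / τ + β * τ = (Real.log x - μ + β * τ ^ 2) / τ := by
    field_simp
  have hexp : β * τ * ((Real.log x - μ) / τ) + (β * τ) ^ 2 / 2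
      = Real.log x * β + (-β * μ + β ^ 2 * τ ^ 2 / 2) := by
    field_simp
    ring
  rw [phi_eq_exp_mul_phi_add _ (β * τ), hshift, hexp, Real.exp_add, ← Real.rpow_def_of_pos hx]

theorem plnCDF_hasDerivAt_general (β μ τ : ℝ) (hτ : 0 < τ) :
    ∀ x : ℝ, 0 < x → HasDerivAt (plnCDF β μ τ) (plnPDF β μ τ x) x := by
  intro x hx
  have hlog : HasDerivAt (fun y => (Real.log y - μ) / τ) (x⁻¹ / τ) x :=
    ((Real.hasDerivAt_log hx.ne').sub_const μ).div_const τ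
  have hlog' : HasDerivAt (fun y => (Real.log y - μ + β * τ ^ 2) / τ) (x⁻¹ / τ) x := by
    simpa using (((Real.hasDerivAt_log hx.ne').sub_const μ).add_const (β * τ ^ 2)).div_const τ
  have hpow : HasDerivAt (fun y : ℝ => y ^ β) (β * x ^ (β - 1)) x :=
    Real.hasDerivAt_rpow_const (Or.inl hx.ne')
  have hF := ((hasDerivAt_Phi _).comp x hlog).add
    ((hpow.mul_const (Real.exp (-β * μ + β ^ 2 * τ ^ 2 / 2))).mul
      ((hasDerivAt_PhiC _).comp x hlog'))
  refine hF.congr_deriv ?_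
  rw [plnPDF, Function.comp_apply, phi_log_div_eq β μ τ x hτ.ne' hx]
  ring

theorem plnCDF_hasDerivAt (β μ τ : ℝ) (hβ : 0 < β) (hτ : 0 < τ) :
    ∀ x : ℝ, 0 < x → HasDerivAt (plnCDF β μ τ) (plnPDF β μ τ x) x :=
  plnCDF_hasDerivAt_general β μ τ hτ
end

section
/- The Pareto-Lognormal CDF F(x) = Φ((log x − μ)/τ) + x^β e^{−βμ + β²τ²/2} Φᶜ((log x − μ + βτ²)/τ) satisfies F(x) → 0 as x → 0⁺ and F(x) → 1 as x → ∞. -/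
open MeasureTheory Filter

/-! `Phi` is the CDF of the standard Gaussian measure, which gives the limits of the first
summand. The second summand is at most a constant times `x ^ β`, hence vanishes at `0`. At
infinity, Chernoff's bound `Φᶜ(a) ≤ exp (-t a + t² / 2)` taken at `t = 2βτ` shows that
`x ^ β Φᶜ((log x - μ + βτ²) / τ) ≤ exp (2βμ) x ^ (-β)`. -/

open ProbabilityTheory Real Topology

lemma Phi_eq_cdf_gaussianReal (x : ℝ) : Phi x = cdf (gaussianReal 0 1) x := by
  rw [cdf_eq_real, measureReal_def, gaussianReal_apply_eq_integral _ one_ne_zero,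
    ENNReal.toReal_ofReal (setIntegral_nonneg measurableSet_Iic
      fun t _ => gaussianPDFReal_nonneg 0 1 t)]
  simp [Phi, gaussianPDFReal]

lemma tendsto_Phi_atBot : Tendsto Phi atBot (𝓝 0) := by
  simpa only [← funext Phi_eq_cdf_gaussianReal] using tendsto_cdf_atBot (gaussianReal 0 1)

lemma tendsto_Phi_atTop : Tendsto Phi atTop (𝓝 1) := by
  simpa only [← funext Phi_eq_cdf_gaussianReal] using tendsto_cdf_atTop (gaussianReal 0 1)

lemma PhiC_eq_measureReal_Ioi (x : ℝ) : PhiC x = (gaussianReal 0 1).real (Set.Ioi x) := by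
  rw [PhiC, Phi_eq_cdf_gaussianReal, cdf_eq_real, ← Set.compl_Iic,
    probReal_compl_eq_one_sub measurableSet_Iic]

lemma PhiC_nonneg (x : ℝ) : 0 ≤ PhiC x := by
  rw [PhiC_eq_measureReal_Ioi]; exact measureReal_nonneg

lemma PhiC_le_one (x : ℝ) : PhiC x ≤ 1 := by
  rw [PhiC_eq_measureReal_Ioi]; exact measureReal_le_one

lemma PhiC_le_exp {t : ℝ} (ht : 0 ≤ t) (a : ℝ) : PhiC a ≤ exp (-t * a + t ^ 2 / 2) :=
  calc PhiC a ≤ (gaussianReal 0 1).real {x | a ≤ id x} := by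
        rw [PhiC_eq_measureReal_Ioi]
        exact measureReal_mono Set.Ioi_subset_Ici_self
    _ ≤ exp (-t * a) * mgf id (gaussianReal 0 1) t :=
        measure_ge_le_exp_mul_mgf a ht (integrable_exp_mul_gaussianReal t)
    _ = exp (-t * a + t ^ 2 / 2) := by
        rw [mgf_id_gaussianReal, ← exp_add]; simp

section Tail

variable {β μ τ : ℝ}

lemma rpow_mul_PhiC_le (hβ : 0 ≤ β) (hτ : 0 < τ) {x : ℝ} (hx : 0 < x) :
    x ^ β * PhiC ((log x - μ + β * τ ^ 2) / τ) ≤ exp (2 * β * μ) * x ^ (-β) := by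
  have hChernoff := PhiC_le_exp (by positivity : 0 ≤ 2 * β * τ) ((log x - μ + β * τ ^ 2) / τ)
  calc x ^ β * PhiC ((log x - μ + β * τ ^ 2) / τ)
      ≤ exp (log x * β) * exp (-(2 * β * τ) * ((log x - μ + β * τ ^ 2) / τ)
          + (2 * β * τ) ^ 2 / 2) := by
        rw [← rpow_def_of_pos hx]; gcongr
    _ = exp (2 * β * μ) * exp (log x * -β) := by
        rw [← exp_add, ← exp_add]; congr 1; field_simp; ring
    _ = exp (2 * β * μ) * x ^ (-β) := by rw [rpow_def_of_pos hx]

lemma tendsto_rpow_mul_PhiC_atTop (hβ : 0 < β) (hτ : 0 < τ) :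
    Tendsto (fun x => x ^ β * PhiC ((log x - μ + β * τ ^ 2) / τ)) atTop (𝓝 0) := by
  have hbound : Tendsto (fun x : ℝ => exp (2 * β * μ) * x ^ (-β)) atTop (𝓝 0) := by
    simpa using (tendsto_rpow_neg_atTop hβ).const_mul (exp (2 * β * μ))
  refine squeeze_zero' ?_ ?_ hbound
  · filter_upwards [eventually_gt_atTop 0] with x hx
    exact mul_nonneg (rpow_nonneg hx.le β) (PhiC_nonneg _)
  · filter_upwards [eventually_gt_atTop 0] with x hx
    exact rpow_mul_PhiC_le hβ.le hτ hx

end Tail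

lemma tendsto_rpow_mul_PhiC_nhdsGT_zero {β : ℝ} (hβ : 0 < β) (g : ℝ → ℝ) :
    Tendsto (fun x => x ^ β * PhiC (g x)) (𝓝[>] 0) (𝓝 0) := by
  have hbound : Tendsto (fun x : ℝ => x ^ β) (𝓝[>] 0) (𝓝 0) := by
    simpa [zero_rpow hβ.ne'] using
      (continuousAt_rpow_const 0 β (Or.inr hβ.le)).tendsto.mono_left nhdsWithin_le_nhds
  refine squeeze_zero' ?_ ?_ hbound
  · filter_upwards [self_mem_nhdsWithin] with x (hx : 0 < x)
    exact mul_nonneg (rpow_nonneg hx.le β) (PhiC_nonneg _)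
  · filter_upwards [self_mem_nhdsWithin] with x (hx : 0 < x)
    exact mul_le_of_le_one_right (rpow_nonneg hx.le β) (PhiC_le_one _)

theorem plnCDF_limits (β μ τ : ℝ) (hβ : 0 < β) (hτ : 0 < τ) :
    Tendsto (plnCDF β μ τ) (nhdsWithin 0 (Set.Ioi 0)) (nhds 0) ∧
    Tendsto (plnCDF β μ τ) atTop (nhds 1) := by
  set K := exp (-β * μ + β ^ 2 * τ ^ 2 / 2)
  have hF : plnCDF β μ τ = fun x => Phi ((log x - μ) / τ) +
      K * (x ^ β * PhiC ((log x - μ + β * τ ^ 2) / τ)) := by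
    funext x; rw [plnCDF]; ring
  have hlog_atBot : Tendsto (fun x => (log x - μ) / τ) (𝓝[>] 0) atBot :=
    (tendsto_atBot_add_const_right _ (-μ) tendsto_log_nhdsGT_zero).atBot_div_const hτ
  have hlog_atTop : Tendsto (fun x => (log x - μ) / τ) atTop atTop :=
    (tendsto_atTop_add_const_right _ (-μ) tendsto_log_atTop).atTop_div_const hτ
  rw [hF]
  constructor
  · simpa using (tendsto_Phi_atBot.comp hlog_atBot).add
      ((tendsto_rpow_mul_PhiC_nhdsGT_zero hβ _).const_mul K)
  · simpa using (tendsto_Phi_atTop.comp hlog_atTop).add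
      ((tendsto_rpow_mul_PhiC_atTop hβ hτ).const_mul K)
end
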